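/- arXiv:1212.0150 — 3 statements merged into one kernel-verified Lean document; each statement's English description precedes it below -/
import Mathlib

section
/- Let λ be a critical weight that is subgeneric with R(λ) = {±α} and α↓λ ≠ λ. Assume (as given by Arakawa–Fiebig) that for every subgeneric critical μ with R(μ) = {±β} there is a short exact sequence 0 → L(β↓μ) → Δ̄(μ) → L(μ) → 0 of characters. Then ch L(α↓λ) = ∑_{i≥1} (ch Δ̄(α↓^{2i−1}λ) − ch Δ̄(α↓^{2i}λ)), the sum being interpreted in the completed group ring of ĥ*. -/
/-- Let `λ` be critical subgeneric with `R(λ) = {±α}` and `α↓λ ≠ λ`.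
Assuming the Arakawa–Fiebig short exact sequences on the level of characters,
`ch Δ̄(μ) = ch L(μ) + ch L(α↓μ)` for all the (subgeneric) iterates `μ = α↓ⁿλ`, one has
`ch L(α↓λ) = ∑_{i≥1} (ch Δ̄(α↓^{2i−1}λ) − ch Δ̄(α↓^{2i}λ))`, the sum interpreted in the
completed group ring of `ĥ*`, i.e. pointwise at each weight (where it has finite
support, characters being supported below finitely many weights). -/
theorem subgeneric_character_sum
    {V : Type*}
    (lam : V)                      -- the subgeneric critical weight λ
    (down : V → V)                 -- the operation α↓
    (chL chD : V → V → ℤ)          -- characters of L(μ) and of Δ̄(μ), as weight multiplicity functions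
    (hne : down lam ≠ lam)         -- α↓λ ≠ λ
    (hses : ∀ (n : ℕ) (μ : V),     -- SES L(α↓ν) ↪ Δ̄(ν) ↠ L(ν) for ν = α↓ⁿλ, on characters
      chD (down^[n] lam) μ = chL (down^[n] lam) μ + chL (down^[n + 1] lam) μ)
    (hvanish : ∀ μ : V, ∃ N : ℕ, ∀ m ≥ N, chL (down^[m] lam) μ = 0)
    (hfin : ∀ μ : V, {i : ℕ | chD (down^[i] lam) μ ≠ 0}.Finite) :
    ∀ μ : V, chL (down lam) μ =
      ∑ᶠ i : ℕ, (chD (down^[2 * i + 1] lam) μ - chD (down^[2 * i + 2] lam) μ) := by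
  intro μ
  obtain ⟨N, hN⟩ := hvanish μ
  have key : ∀ i : ℕ, chD (down^[2 * i + 1] lam) μ - chD (down^[2 * i + 2] lam) μ
      = chL (down^[2 * i + 1] lam) μ - chL (down^[2 * (i + 1) + 1] lam) μ := by
    intro i
    have h1 := hses (2 * i + 1) μ
    have h2 := hses (2 * i + 2) μ
    rw [show 2 * i + 1 + 1 = 2 * i + 2 from by ring] at h1
    rw [show 2 * i + 2 + 1 = 2 * (i + 1) + 1 from by ring] at h2
    omega
  have hsupp : (Function.support fun i : ℕ =>
      chD (down^[2 * i + 1] lam) μ - chD (down^[2 * i + 2] lam) μ) ⊆ ↑(Finset.range N) := by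
    intro i hi
    simp only [Finset.coe_range, Set.mem_Iio]
    by_contra h
    push_neg at h
    apply hi
    show chD (down^[2 * i + 1] lam) μ - chD (down^[2 * i + 2] lam) μ = 0
    rw [key i, hN (2 * i + 1) (by omega), hN (2 * (i + 1) + 1) (by omega)]
    ring
  rw [finsum_eq_sum_of_support_subset _ hsupp]
  refine Eq.symm ?_
  calc ∑ i ∈ Finset.range N, (chD (down^[2 * i + 1] lam) μ - chD (down^[2 * i + 2] lam) μ)
      = ∑ i ∈ Finset.range N,
        (chL (down^[2 * i + 1] lam) μ - chL (down^[2 * (i + 1) + 1] lam) μ) := by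
        exact Finset.sum_congr rfl fun i _ => key i
    _ = chL (down^[2 * 0 + 1] lam) μ - chL (down^[2 * N + 1] lam) μ :=
        Finset.sum_range_sub' (fun i => chL (down^[2 * i + 1] lam) μ) N
    _ = chL (down lam) μ := by
        rw [hN (2 * N + 1) (by omega)]
        norm_num
end

section
/- Let M be a free ℂ[t]-module of finite rank with a symmetric ℂ[t]-bilinear form whose determinant D ∈ ℂ[t] (with respect to some basis) is nonzero. Define Mⁱ = {m ∈ M : (m, M) ⊆ tⁱℂ[t]} and let M̄ⁱ be the image of Mⁱ in M̄ = M/tM. Then ∑_{i>0} dim_ℂ M̄ⁱ = ord_t(D). -/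
/-!
Over the principal ideal domain `ℂ[t]` the form, viewed as an injective map `B : M → M^∨`, has a
Smith normal form: bases `e` of `M` and `f` of `M^∨` with `B e_j = a_j f_j`. In these coordinates
`m ∈ Mⁱ` iff `tⁱ ∣ a_j m_j` for every `j`, so `M̄ⁱ` is spanned by the `ē_j` with `tⁱ ∣ a_j` and has
dimension `#{j | i ≤ ord_t a_j}`. Summing over `i > 0` gives `∑_j ord_t a_j = ord_t (∏_j a_j)`, and
`∏_j a_j` is associated to `D`, both being determinants of `B` with respect to pairs of bases.
-/

open Polynomial Module

/-- The `i`-th step of the Jantzen filtration: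
`Mⁱ = {m ∈ M : (m, M) ⊆ tⁱℂ[t]}`. -/
def jantzenStep {M : Type*} [AddCommGroup M] [Module (Polynomial ℂ) M]
    (B : M →ₗ[Polynomial ℂ] M →ₗ[Polynomial ℂ] Polynomial ℂ) (i : ℕ) :
    Submodule (Polynomial ℂ) M where
  carrier := {m : M | ∀ m' : M, X ^ i ∣ B m m'}
  add_mem' := by
    intro x y hx hy m'
    rw [map_add, LinearMap.add_apply]
    exact dvd_add (hx m') (hy m')
  zero_mem' := by intro m'; simp
  smul_mem' := by
    intro c x hx m'
    rw [map_smul, LinearMap.smul_apply, smul_eq_mul]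
    exact Dvd.dvd.mul_left (hx m') c

namespace Module.Basis

variable {R M N ι : Type*} [CommRing R] [AddCommGroup M] [Module R M] [AddCommGroup N] [Module R N]

theorem repr_apply_eq_mul_repr {g : M →ₗ[R] N} {e : Basis ι R M} {f : Basis ι R N} {a : ι → R}
    (hg : ∀ i, g (e i) = a i • f i) (m : M) (j : ι) :
    f.repr (g m) j = a j * e.repr m j := by
  classical
  have : (f.coord j).comp g = a j • e.coord j := e.ext fun i => by
    rcases eq_or_ne i j with rfl | hij <;> simp [*]
  exact LinearMap.congr_fun this m

theorem dvd_apply_iff_dvd_repr [Fintype ι] [Free R M] [Module.Finite R M]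
    (f : Basis ι R (Dual R M)) (φ : Dual R M) (r : R) :
    (∀ m, r ∣ φ m) ↔ ∀ j, r ∣ f.repr φ j := by
  constructor
  · intro h j
    let b := Free.chooseBasis R M
    rw [← b.sum_dual_apply_smul_coord φ, map_sum, Finsupp.finsetSum_apply]
    exact Finset.dvd_sum fun i _ => by simpa using (h (b i)).mul_right _
  · intro h m
    rw [← f.sum_repr φ, LinearMap.sum_apply]
    exact Finset.dvd_sum fun j _ => by simpa using (h j).mul_right _

theorem mem_span_smul_iff (e : Basis ι R M) (r : R) (m : M) :
    m ∈ Submodule.span R {y | ∃ x, y = r • x} ↔ ∀ j, r ∣ e.repr m j := by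
  constructor
  · intro hm
    induction hm using Submodule.span_induction with
    | mem y hy => obtain ⟨x, rfl⟩ := hy; simp
    | zero => simp
    | add y z _ _ hy hz => simpa using fun j => dvd_add (hy j) (hz j)
    | smul c y _ hy => simpa using fun j => (hy j).mul_left c
  · intro h
    choose q hq using h
    refine Submodule.subset_span ⟨∑ j ∈ (e.repr m).support, q j • e j, ?_⟩
    conv_lhs => rw [← e.linearCombination_repr m]
    simp only [Finsupp.linearCombination_apply, Finsupp.sum, Finset.smul_sum, smul_smul, ← hq]

end Module.Basis

namespace LinearMap

variable {R M N ι : Type*} [CommRing R] [AddCommGroup M] [Module R M] [AddCommGroup N] [Module R N]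
  [Fintype ι]

theorem associated_det_toMatrix [DecidableEq ι] (g : M →ₗ[R] N) (b b' : Basis ι R M)
    (c c' : Basis ι R N) : Associated (toMatrix b c g).det (toMatrix b' c' g).det := by
  rw [← basis_toMatrix_mul_linearMap_toMatrix_mul_basis_toMatrix b b' c c', Matrix.det_mul,
    Matrix.det_mul]
  exact (associated_mul_unit_left _ _ (Matrix.isUnit_det_of_right_inverse
    (b'.toMatrix_mul_toMatrix_flip b))).trans
    (associated_unit_mul_left _ _ (Matrix.isUnit_det_of_right_inverse
      (c.toMatrix_mul_toMatrix_flip c')))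

theorem injective_of_det_toMatrix_ne_zero [DecidableEq ι] [IsDomain R] {g : M →ₗ[R] N}
    (b : Basis ι R M) (c : Basis ι R N) (h : (toMatrix b c g).det ≠ 0) :
    Function.Injective g := by
  rw [← ker_eq_bot, Submodule.eq_bot_iff]
  intro m hm
  by_contra hm0
  refine h (Matrix.exists_mulVec_eq_zero_iff.mp ⟨b.repr m, ?_, ?_⟩)
  · simpa using hm0
  · rw [toMatrix_mulVec_repr, mem_ker.mp hm, map_zero]
    rfl

theorem toMatrix_eq_diagonal [DecidableEq ι] {g : M →ₗ[R] N} {e : Basis ι R M}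
    {f : Basis ι R N} {a : ι → R} (hg : ∀ i, g (e i) = a i • f i) :
    toMatrix e f g = Matrix.diagonal a := by
  ext i j
  rw [toMatrix_apply, hg, map_smul, f.repr_self, Matrix.diagonal_apply]
  split_ifs with h <;> simp [h]

/-- Smith normal form of an injective map between free modules of the same rank over a PID. -/
theorem exists_basis_apply_eq_smul_basis [IsDomain R] [IsPrincipalIdealRing R]
    (b : Basis ι R M) (c : Basis ι R N) {g : M →ₗ[R] N} (hg : Function.Injective g) :
    ∃ (e : Basis ι R M) (f : Basis ι R N) (a : ι → R), ∀ i, g (e i) = a i • f i := by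
  have hrank : finrank R (range g) = finrank R N := by
    rw [finrank_range_of_inj hg, finrank_eq_card_basis b, finrank_eq_card_basis c]
  obtain ⟨f, a, e, he⟩ := Submodule.exists_smith_normal_form_of_rank_eq c hrank
  exact ⟨e.map (LinearEquiv.ofInjective g hg).symm, f, a, fun i => by simp [← he i]⟩

end LinearMap

namespace Polynomial

variable {R : Type*} [CommRing R]

theorem rootMultiplicity_eq_of_associated {p q : R[X]} (h : Associated p q) (x : R) :
    p.rootMultiplicity x = q.rootMultiplicity x := by
  classical
  simp only [rootMultiplicity_eq_multiplicity, h.eq_zero_iff, multiplicity_eq_of_associated_right h]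

theorem rootMultiplicity_prod [IsDomain R] {ι : Type*} {s : Finset ι} {p : ι → R[X]}
    (h : ∏ i ∈ s, p i ≠ 0) (x : R) :
    (∏ i ∈ s, p i).rootMultiplicity x = ∑ i ∈ s, (p i).rootMultiplicity x := by
  classical
  simp only [← count_roots, roots_prod p s h, Multiset.count_bind]
  rfl

theorem X_pow_dvd_iff_le_rootMultiplicity {p : R[X]} (hp : p ≠ 0) (n : ℕ) :
    X ^ n ∣ p ↔ n ≤ p.rootMultiplicity 0 := by
  rw [le_rootMultiplicity_iff hp, map_zero, sub_zero]

end Polynomial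

open Finset in
theorem finsum_card_filter_lt {ι : Type*} (s : Finset ι) (v : ι → ℕ) :
    ∑ᶠ i : ℕ, #{j ∈ s | i < v j} = ∑ j ∈ s, v j := by
  classical
  have hsupp : (Function.support fun i => #{j ∈ s | i < v j}) ⊆ range (s.sup v) := by
    intro i hi
    obtain ⟨j, hj⟩ := card_ne_zero.mp hi
    rw [mem_filter] at hj
    exact mem_range.mpr (hj.2.trans_le (le_sup hj.1))
  rw [finsum_eq_sum_of_support_subset _ hsupp]
  simp only [card_filter]
  rw [sum_comm]
  refine sum_congr rfl fun j hj => ?_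
  have hv : v j ≤ s.sup v := le_sup hj
  have hrange : {i ∈ range (s.sup v) | i < v j} = range (v j) := by
    ext i
    simp only [mem_filter, mem_range]
    omega
  rw [← card_filter, hrange, card_range]

theorem Submodule.finrank_map_mkQ_eq_finrank_map {K R M V : Type*} [CommRing K] [Ring R]
    [Algebra K R] [AddCommGroup M] [Module R M] [Module K M] [IsScalarTower K R M]
    [AddCommGroup V] [Module K V] (P N : Submodule R M) (g : M →ₗ[K] V)
    (hg : LinearMap.ker g = P.restrictScalars K) :
    finrank K (N.map P.mkQ) = finrank K ((N.restrictScalars K).map g) := by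
  let g₀ : (M ⧸ P) →ₗ[K] V :=
    ((P.restrictScalars K).liftQ g hg.ge).comp (Quotient.restrictScalarsEquiv K P).symm.toLinearMap
  have hg₀ : Function.Injective g₀ :=
    (LinearMap.ker_eq_bot.mp ((P.restrictScalars K).ker_liftQ_eq_bot' g hg.symm)).comp
      (Quotient.restrictScalarsEquiv K P).symm.injective
  have hmap : ((N.map P.mkQ).restrictScalars K).map g₀ = (N.restrictScalars K).map g := by
    ext v
    constructor
    · rintro ⟨_, ⟨m, hm, rfl⟩, rfl⟩
      exact ⟨m, hm, rfl⟩
    · rintro ⟨m, hm, rfl⟩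
      exact ⟨P.mkQ m, ⟨m, hm, rfl⟩, rfl⟩
  rw [← hmap]
  exact LinearEquiv.finrank_eq (equivMapOfInjective g₀ hg₀ ((N.map P.mkQ).restrictScalars K))

theorem Finsupp.finrank_supported {K ι : Type*} [Ring K] [StrongRankCondition K] [Finite ι] (s : Set ι) :
    finrank K (supported K K s) = Nat.card s := by
  have := Fintype.ofFinite s
  rw [(supportedEquivFinsupp s).finrank_eq, finrank_finsupp_self, Nat.card_eq_fintype_card]

section ConstantCoeff

variable {K M ι : Type*} [CommRing K] [AddCommGroup M] [Module K[X] M] [Module K M]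
  [IsScalarTower K K[X] M]

noncomputable def Module.Basis.coeffZeroRepr (e : Basis ι K[X] M) : M →ₗ[K] ι →₀ K :=
  Finsupp.mapRange.linearMap (lcoeff K 0) ∘ₗ e.repr.toLinearMap.restrictScalars K

theorem Module.Basis.coeffZeroRepr_apply (e : Basis ι K[X] M) (m : M) (j : ι) :
    e.coeffZeroRepr m j = (e.repr m j).coeff 0 := rfl

theorem Module.Basis.ker_coeffZeroRepr (e : Basis ι K[X] M) :
    LinearMap.ker e.coeffZeroRepr = (Submodule.span K[X] {y | ∃ x, y = (X : K[X]) • x}).restrictScalars K := by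
  ext m
  simp only [LinearMap.mem_ker, Submodule.restrictScalars_mem, e.mem_span_smul_iff, X_dvd_iff,
    Finsupp.ext_iff, e.coeffZeroRepr_apply, Finsupp.coe_zero, Pi.zero_apply]

end ConstantCoeff

section JantzenStep

variable {M ι : Type*} [AddCommGroup M] [Module ℂ[X] M] [Fintype ι]
  {B : M →ₗ[ℂ[X]] M →ₗ[ℂ[X]] ℂ[X]} {e : Basis ι ℂ[X] M} {f : Basis ι ℂ[X] (Dual ℂ[X] M)}
  {a : ι → ℂ[X]}

theorem mem_jantzenStep_iff (hB : ∀ j, B (e j) = a j • f j) (i : ℕ) (m : M) :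
    m ∈ jantzenStep B i ↔ ∀ j, X ^ i ∣ a j * e.repr m j := by
  have := Free.of_basis e
  have := Module.Finite.of_basis e
  simp only [← Basis.repr_apply_eq_mul_repr hB]
  exact f.dvd_apply_iff_dvd_repr (B m) _

variable [Module ℂ M] [IsScalarTower ℂ ℂ[X] M]

theorem map_coeffZeroRepr_jantzenStep (hB : ∀ j, B (e j) = a j • f j) (i : ℕ) :
    ((jantzenStep B i).restrictScalars ℂ).map e.coeffZeroRepr =
      Finsupp.supported ℂ ℂ {j | X ^ i ∣ a j} := by
  apply le_antisymm
  · rintro _ ⟨m, hm, rfl⟩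
    rw [Finsupp.mem_supported']
    intro j hj
    rw [e.coeffZeroRepr_apply, ← X_dvd_iff]
    by_contra hX
    exact hj (prime_X.pow_dvd_of_dvd_mul_right i hX ((mem_jantzenStep_iff hB i m).mp hm j))
  · intro x hx
    rw [Finsupp.mem_supported'] at hx
    refine ⟨e.repr.symm (x.mapRange C C_0), (mem_jantzenStep_iff hB i _).mpr fun j => ?_, ?_⟩
    · by_cases hj : j ∈ {j | X ^ i ∣ a j}
      · exact dvd_mul_of_dvd_left hj _
      · simp [hx j hj]
    · ext j
      simp [e.coeffZeroRepr_apply]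

theorem finrank_map_mkQ_jantzenStep (hB : ∀ j, B (e j) = a j • f j) (i : ℕ) :
    finrank ℂ ((jantzenStep B i).map (Submodule.span ℂ[X] {y | ∃ x, y = (X : ℂ[X]) • x}).mkQ) =
      Nat.card {j // X ^ i ∣ a j} := by
  rw [Submodule.finrank_map_mkQ_eq_finrank_map _ _ _ e.ker_coeffZeroRepr,
    map_coeffZeroRepr_jantzenStep hB, Finsupp.finrank_supported]
  rfl

end JantzenStep

theorem jantzen_filtration_sum_eq_ord_general
    {M : Type*} [AddCommGroup M] [Module (Polynomial ℂ) M]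
    [Module ℂ M] [IsScalarTower ℂ (Polynomial ℂ) M]
    (n : ℕ) (b : Module.Basis (Fin n) (Polynomial ℂ) M)
    (B : M →ₗ[Polynomial ℂ] M →ₗ[Polynomial ℂ] Polynomial ℂ)
    (D : Polynomial ℂ)
    (hD : D = Matrix.det (Matrix.of fun i j : Fin n => B (b i) (b j)))
    (hD0 : D ≠ 0)
    (tM : Submodule (Polynomial ℂ) M)
    (htM : tM = Submodule.span (Polynomial ℂ) {m : M | ∃ x : M, m = (X : Polynomial ℂ) • x}) :
    ∑ᶠ i : ℕ, Module.finrank ℂ (Submodule.map tM.mkQ (jantzenStep B (i + 1)))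
      = D.rootMultiplicity 0 := by
  classical
  have hgram : Matrix.of (fun i j : Fin n => B (b i) (b j)) =
      (LinearMap.toMatrix b b.dualBasis B).transpose := by
    ext i j
    simp [LinearMap.toMatrix_apply]
  have hinj : Function.Injective B := LinearMap.injective_of_det_toMatrix_ne_zero b b.dualBasis
    (by rwa [← Matrix.det_transpose, ← hgram, ← hD])
  obtain ⟨e, f, a, hB⟩ := LinearMap.exists_basis_apply_eq_smul_basis b b.dualBasis hinj
  have hDa : Associated D (∏ j, a j) := by
    rw [hD, hgram, Matrix.det_transpose, ← Matrix.det_diagonal,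
      ← LinearMap.toMatrix_eq_diagonal hB]
    exact LinearMap.associated_det_toMatrix B b e b.dualBasis f
  have ha : ∀ j, a j ≠ 0 := fun j =>
    Finset.prod_ne_zero_iff.mp (hDa.ne_zero_iff.mp hD0) j (Finset.mem_univ j)
  rw [rootMultiplicity_eq_of_associated hDa, rootMultiplicity_prod (hDa.ne_zero_iff.mp hD0),
    ← finsum_card_filter_lt]
  refine finsum_congr fun i => ?_
  rw [htM, finrank_map_mkQ_jantzenStep hB]
  simp_rw [X_pow_dvd_iff_le_rootMultiplicity (ha _), Nat.succ_le_iff, Nat.card_eq_fintype_card,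
    Fintype.card_subtype]

/-- abstract Jantzen filtration lemma: Let `M` be a free `ℂ[t]`-module of
finite rank with a symmetric bilinear form whose Gram determinant `D` with respect to a
basis is nonzero.  With `Mⁱ = {m : (m, M) ⊆ tⁱℂ[t]}` and `M̄ⁱ` the image of `Mⁱ` in
`M̄ = M/tM`, one has `∑_{i>0} dim_ℂ M̄ⁱ = ord_t(D)`. -/
theorem jantzen_filtration_sum_eq_ord
    {M : Type*} [AddCommGroup M] [Module (Polynomial ℂ) M]
    [Module ℂ M] [IsScalarTower ℂ (Polynomial ℂ) M]
    (n : ℕ) (b : Module.Basis (Fin n) (Polynomial ℂ) M)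
    (B : M →ₗ[Polynomial ℂ] M →ₗ[Polynomial ℂ] Polynomial ℂ)
    (hsymm : ∀ x y : M, B x y = B y x)
    (D : Polynomial ℂ)
    (hD : D = Matrix.det (Matrix.of fun i j : Fin n => B (b i) (b j)))
    (hD0 : D ≠ 0)
    (tM : Submodule (Polynomial ℂ) M)
    (htM : tM = Submodule.span (Polynomial ℂ) {m : M | ∃ x : M, m = (X : Polynomial ℂ) • x}) :
    ∑ᶠ i : ℕ, Module.finrank ℂ (Submodule.map tM.mkQ (jantzenStep B (i + 1)))
      = D.rootMultiplicity 0 :=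
  jantzen_filtration_sum_eq_ord_general n b B D hD hD0 tM htM
end

section
/- Let λ be a critical weight with ⟨λ+ρ, α^∨⟩ ∉ ℤ∖{0} for all α ∈ R⁺, and suppose p ∈ S(h) is a prime divisor of the restricted Shapovalov determinant D̄_ε(ε − ν) for some ν, such that all such determinants are nonzero and the restricted Verma module with generic highest weight is simple. Then, assuming simplicity of Δ̄(μ) for all generic critical μ implies nonvanishing of the evaluated determinant at μ, every prime divisor p of D̄_ε(ε − ν) is, up to a scalar, of the form α^∨ + ρ(α^∨) − r with α ∈ R⁺ and r ∈ ℤ∖{0}. -/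
/-!
Suppose a prime divisor `p` of `D` divided none of the countably many affine forms
`α^∨ + ρ(α^∨) − r`. Make `p` depend on the first coordinate; then choose the remaining
coordinates `μ'` off the countably many proper hypersurfaces given by the leading coefficient
of `p` and by the resultants of `p` with the forms (the forms themselves when they do not
involve the first coordinate), and take for the first coordinate a root of
`p(·, μ')`. The resulting zero `μ` of `p` is generic, yet `D(μ) = 0`. So `p` divides one of the
forms, and since these are irreducible, `p` is associated to it.
-/

instance Complex.instUncountable : Uncountable ℂ := Complex.ofReal_injective.uncountable

theorem Prime.dvd_X_sub_C_of_isRoot {R : Type*} [CommRing R] [IsDomain R]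
    {P : Polynomial R} (hP : Prime P) {s : R} (hs : P.IsRoot s) :
    P ∣ Polynomial.X - Polynomial.C s :=
  ((Polynomial.prime_X_sub_C s).associated_of_dvd hP (Polynomial.dvd_iff_isRoot.2 hs)).dvd'

namespace MvPolynomial

section AffineForm

variable {σ R : Type*} [Fintype σ] [CommSemiring R]

noncomputable def affineForm (a : σ → R) (b : R) : MvPolynomial σ R :=
  (∑ i, C (a i) * X i) + C b

@[simp]
theorem eval_affineForm (a : σ → R) (b : R) (μ : σ → R) :
    eval μ (affineForm a b) = (∑ i, a i * μ i) + b := by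
  simp [affineForm]

theorem rename_affineForm {τ : Type*} [Fintype τ] (e : σ ≃ τ) (a : σ → R) (b : R) :
    rename e (affineForm a b) = affineForm (a ∘ e.symm) b := by
  simp only [affineForm, map_add, map_sum, map_mul, rename_C, rename_X]
  congr 1
  exact Fintype.sum_equiv e _ _ fun i => by simp

theorem coeff_single_affineForm (a : σ → R) (b : R) (i : σ) :
    coeff (Finsupp.single i 1) (affineForm a b) = a i := by
  classical
  simp [affineForm, coeff_sum, coeff_C_mul, coeff_X, coeff_C, Finsupp.single_left_inj,
    eq_comm (a := (0 : σ →₀ ℕ))]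

theorem totalDegree_affineForm [Nontrivial R] {a : σ → R} (ha : a ≠ 0) (b : R) :
    (affineForm a b).totalDegree = 1 := by
  obtain ⟨i, hi⟩ := Function.ne_iff.1 ha
  refine le_antisymm ?_ ?_
  · refine (totalDegree_add _ _).trans (max_le (totalDegree_finsetSum_le fun j _ => ?_) ?_)
    · exact (totalDegree_mul _ _).trans (by simp [totalDegree_X])
    · simp
  · simpa using le_totalDegree (s := Finsupp.single i 1) (p := affineForm a b)
      (by rw [mem_support_iff, coeff_single_affineForm]; exact hi)

theorem finSuccEquiv_affineForm {m : ℕ} (a : Fin (m + 1) → R) (b : R) :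
    finSuccEquiv R m (affineForm a b) =
      Polynomial.C (C (a 0)) * Polynomial.X + Polynomial.C (affineForm (a ∘ Fin.succ) b) := by
  have hC (x : R) : finSuccEquiv R m (C x) = Polynomial.C (C x) := by simp [finSuccEquiv_apply]
  simp [affineForm, Fin.sum_univ_succ, finSuccEquiv_X_zero, finSuccEquiv_X_succ, hC, add_assoc]

end AffineForm

theorem irreducible_affineForm {σ K : Type*} [Fintype σ] [Field K] {a : σ → K} (ha : a ≠ 0)
    (b : K) : Irreducible (affineForm a b) := by
  obtain ⟨i, hi⟩ := Function.ne_iff.1 ha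
  refine irreducible_of_totalDegree_eq_one (totalDegree_affineForm ha b) fun x hx => ?_
  refine isUnit_iff_ne_zero.2 fun hx0 => hi ?_
  simpa [hx0, coeff_single_affineForm] using hx (Finsupp.single i 1)

theorem exists_degreeOf_ne_zero_of_prime {σ K : Type*} [Field K] {p : MvPolynomial σ K}
    (hp : Prime p) : ∃ j, degreeOf j p ≠ 0 := by
  by_contra! h
  have hC : p = C (coeff 0 p) := vars_eq_empty_iff_eq_C.1 <| by
    ext j
    simp [mem_vars_iff_degreeOf_ne_zero, h]
  refine hp.not_isUnit (hC ▸ (isUnit_iff_ne_zero.2 fun h0 => hp.ne_zero ?_).map C)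
  rw [hC, h0, map_zero]

theorem exists_forall_eval_ne_zero {R ι : Type*} [CommRing R] [IsDomain R] [Uncountable R]
    [Countable ι] : ∀ {m : ℕ} (f : ι → MvPolynomial (Fin m) R), (∀ k, f k ≠ 0) →
      ∃ μ : Fin m → R, ∀ k, eval μ (f k) ≠ 0
  | 0, f, hf => ⟨Fin.elim0, fun k hk => hf k <| by
      rw [eq_C_of_isEmpty (f k)] at hk ⊢
      simpa using hk⟩
  | m + 1, f, hf => by
    set F : ι → Polynomial (MvPolynomial (Fin m) R) := fun k => finSuccEquiv R m (f k)
    have hF k : F k ≠ 0 := (map_ne_zero_iff _ (finSuccEquiv R m).injective).2 (hf k)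
    obtain ⟨μ, hμ⟩ := exists_forall_eval_ne_zero (fun k => (F k).leadingCoeff)
      fun k => Polynomial.leadingCoeff_ne_zero.2 (hF k)
    have hFμ k : (F k).map (eval μ) ≠ 0 := fun h =>
      hμ k (by simpa using congr_arg (Polynomial.coeff · (F k).natDegree) h)
    obtain ⟨x, hx⟩ : (⋃ k, {x | ((F k).map (eval μ)).IsRoot x})ᶜ.Nonempty :=
      Set.nonempty_compl.2 fun h => Set.not_countable_univ <| h ▸ Set.countable_iUnion fun k =>
        (Polynomial.finite_setOfPred_isRoot (hFμ k)).countable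
    simp only [Set.mem_compl_iff, Set.mem_iUnion, not_exists] at hx
    exact ⟨Fin.cons x μ, fun k => by rw [eval_eq_eval_mv_eval']; exact hx k⟩

section RootsAvoidingAffineForms

variable {K ι : Type*} [Field K] [IsAlgClosed K] [Uncountable K] [Countable ι]

theorem exists_isRoot_map_eval_forall_ne_zero {m : ℕ} {P : Polynomial (MvPolynomial (Fin m) K)}
    (hP : Prime P) (hdeg : 0 < P.natDegree) (a : ι → K) (b : ι → MvPolynomial (Fin m) K)
    (hnd : ∀ k, ¬ P ∣ Polynomial.C (C (a k)) * Polynomial.X + Polynomial.C (b k)) :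
    ∃ (x : K) (μ : Fin m → K), (P.map (eval μ)).IsRoot x ∧ ∀ k, a k * x + eval μ (b k) ≠ 0 := by
  classical
  set s : ι → MvPolynomial (Fin m) K := fun k => C (-(a k)⁻¹) * b k
  have hline k (hk : a k ≠ 0) : Polynomial.C (C (a k)) * Polynomial.X + Polynomial.C (b k) =
      Polynomial.C (C (a k)) * (Polynomial.X - Polynomial.C (s k)) := by
    simp only [s, mul_sub, ← Polynomial.C_mul, ← mul_assoc, ← C_mul, mul_neg,
      mul_inv_cancel₀ hk]
    simp
  -- for `a k ≠ 0`, `P.eval (s k)` is the resultant of `P` and the `k`-th form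
  set g : Option ι → MvPolynomial (Fin m) K :=
    fun o => o.elim P.leadingCoeff fun k => if a k = 0 then b k else P.eval (s k)
  have hg : ∀ o, g o ≠ 0
    | none => Polynomial.leadingCoeff_ne_zero.2 hP.ne_zero
    | some k => by
      by_cases hk : a k = 0
      · refine fun hb => hnd k ?_
        simp_all [g]
      · refine fun hroot => hnd k ?_
        simp only [g, Option.elim, if_neg hk] at hroot
        rw [hline k hk]
        exact (hP.dvd_X_sub_C_of_isRoot hroot).mul_left _
  obtain ⟨μ, hμ⟩ := exists_forall_eval_ne_zero g hg
  have hdeg' : (P.map (eval μ)).degree ≠ 0 :=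
    (Polynomial.natDegree_pos_iff_degree_pos.1 <| by
      rwa [Polynomial.natDegree_map_of_leadingCoeff_ne_zero _ (hμ none)]).ne'
  obtain ⟨x, hx⟩ := IsAlgClosed.exists_root _ hdeg'
  refine ⟨x, μ, hx, fun k hxk => hμ (some k) ?_⟩
  by_cases hk : a k = 0
  · simpa [g, hk] using hxk
  · have hxs : x = eval μ (s k) := by
      simp only [s, map_mul, eval_C]
      field_simp
      linear_combination hxk
    simp only [g, Option.elim, if_neg hk]
    rw [← Polynomial.eval₂_hom, ← Polynomial.eval_map, ← hxs]
    exact hx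

theorem exists_eval_eq_zero_forall_affineForm_ne_zero_of_degreeOf_zero_pos {m : ℕ}
    {p : MvPolynomial (Fin (m + 1)) K} (hp : Prime p) (hdeg : 0 < degreeOf 0 p)
    (a : ι → Fin (m + 1) → K) (b : ι → K) (hnd : ∀ k, ¬ p ∣ affineForm (a k) (b k)) :
    ∃ μ, eval μ p = 0 ∧ ∀ k, eval μ (affineForm (a k) (b k)) ≠ 0 := by
  obtain ⟨x, μ, hx, hμ⟩ := exists_isRoot_map_eval_forall_ne_zero
    ((MulEquiv.prime_iff (finSuccEquiv K m)).2 hp) (by rwa [natDegree_finSuccEquiv])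
    (fun k => a k 0) (fun k => affineForm (a k ∘ Fin.succ) (b k))
    fun k => by rw [← finSuccEquiv_affineForm, map_dvd_iff]; exact hnd k
  refine ⟨Fin.cons x μ, by rw [eval_eq_eval_mv_eval']; exact hx, fun k => ?_⟩
  rw [eval_eq_eval_mv_eval', finSuccEquiv_affineForm]
  simpa [Polynomial.eval_finsetSum] using hμ k

theorem exists_eval_eq_zero_forall_affineForm_ne_zero {n : ℕ} {p : MvPolynomial (Fin n) K}
    (hp : Prime p) (a : ι → Fin n → K) (b : ι → K) (hnd : ∀ k, ¬ p ∣ affineForm (a k) (b k)) :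
    ∃ μ, eval μ p = 0 ∧ ∀ k, eval μ (affineForm (a k) (b k)) ≠ 0 := by
  obtain ⟨j, hj⟩ := exists_degreeOf_ne_zero_of_prime hp
  obtain ⟨m, rfl⟩ : ∃ m, n = m + 1 := Nat.exists_eq_succ_of_ne_zero j.pos.ne'
  set e : Fin (m + 1) ≃ Fin (m + 1) := Equiv.swap j 0
  have hdeg : degreeOf 0 (rename e p) = degreeOf j p := by
    rw [← degreeOf_rename_of_injective e.injective j, Equiv.swap_apply_left]
  obtain ⟨μ, hμp, hμ⟩ := exists_eval_eq_zero_forall_affineForm_ne_zero_of_degreeOf_zero_pos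
    ((MulEquiv.prime_iff (renameEquiv K e)).2 hp) (hdeg ▸ Nat.pos_of_ne_zero hj)
    (fun k => a k ∘ e.symm) b
    fun k => by rw [← rename_affineForm, ← renameEquiv_apply, map_dvd_iff]; exact hnd k
  refine ⟨μ ∘ e, by rwa [← eval_rename], fun k => ?_⟩
  rw [← eval_rename, rename_affineForm]
  exact hμ k

end RootsAvoidingAffineForms

end MvPolynomial

open MvPolynomial

theorem prime_divisors_of_restricted_shapovalov_det_general
    (n : ℕ) {ι : Type*} [Fintype ι]          -- ι indexes the positive finite roots R⁺
    (v : ι → Fin n → ℂ)                      -- coefficient vectors of the coroots α^∨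
    (c : ι → ℂ)                              -- the constants ρ(α^∨)
    (hv : ∀ a : ι, v a ≠ 0)                  -- coroots are nonzero linear forms
    (D : MvPolynomial (Fin n) ℂ)             -- the restricted determinant D̄_ε(ε − ν)
    -- nonvanishing of the evaluated determinant at every generic weight μ:
    (hgen : ∀ μ : Fin n → ℂ,
      (∀ (a : ι) (r : ℤ), r ≠ 0 → (∑ i, v a i * μ i) + c a ≠ (r : ℂ)) →
      MvPolynomial.eval μ D ≠ 0) :
    ∀ p : MvPolynomial (Fin n) ℂ, Prime p → p ∣ D →
      ∃ (a : ι) (r : ℤ), r ≠ 0 ∧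
        Associated p
          ((∑ i, MvPolynomial.C (v a i) * MvPolynomial.X i)
            + MvPolynomial.C (c a - (r : ℂ))) := by
  intro p hp hpD
  obtain ⟨⟨a, r, hr⟩, hpL⟩ :
      ∃ k : ι × {r : ℤ // r ≠ 0}, p ∣ affineForm (v k.1) (c k.1 - k.2) := by
    by_contra! hnd
    obtain ⟨μ, hpμ, hLμ⟩ := exists_eval_eq_zero_forall_affineForm_ne_zero hp _ _ hnd
    refine hgen μ (fun a r hr hμ => hLμ (a, ⟨r, hr⟩) ?_) ?_
    · rw [eval_affineForm]
      linear_combination hμ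
    · exact zero_dvd_iff.1 (hpμ ▸ map_dvd (eval μ) hpD)
  exact ⟨a, r, hr, hp.irreducible.associated_of_dvd (irreducible_affineForm (hv a) _) hpL⟩

/-- Let `λ` be a critical weight with `⟨λ+ρ, α^∨⟩ ∉ ℤ∖{0}` for all
`α ∈ R⁺` (the generic condition), and let `D̄ ∈ S(h)` be a (nonzero) restricted
Shapovalov determinant `D̄_ε(ε − ν)`.  Assuming that the determinant does not vanish
when evaluated at any generic critical weight `μ` (which follows from simplicity of
`Δ̄(μ)` for generic `μ`), every prime divisor `p` of `D̄` is, up to a scalar (i.e. up to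
associates), of the form `α^∨ + ρ(α^∨) − r` with `α ∈ R⁺` and `r ∈ ℤ∖{0}`.  Here
`S(h)` is modelled as `MvPolynomial (Fin n) ℂ` (polynomial functions on `h*`), the
coroot `α^∨` corresponds to the linear form `∑ i, v α i · Xᵢ` and `ρ(α^∨) = c α`. -/
theorem prime_divisors_of_restricted_shapovalov_det
    (n : ℕ) {ι : Type*} [Fintype ι]          -- ι indexes the positive finite roots R⁺
    (v : ι → Fin n → ℂ)                      -- coefficient vectors of the coroots α^∨
    (c : ι → ℂ)                              -- the constants ρ(α^∨)
    (hv : ∀ a : ι, v a ≠ 0)                  -- coroots are nonzero linear forms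
    (D : MvPolynomial (Fin n) ℂ)             -- the restricted determinant D̄_ε(ε − ν)
    (hD : D ≠ 0)
    -- nonvanishing of the evaluated determinant at every generic weight μ:
    (hgen : ∀ μ : Fin n → ℂ,
      (∀ (a : ι) (r : ℤ), r ≠ 0 → (∑ i, v a i * μ i) + c a ≠ (r : ℂ)) →
      MvPolynomial.eval μ D ≠ 0) :
    ∀ p : MvPolynomial (Fin n) ℂ, Prime p → p ∣ D →
      ∃ (a : ι) (r : ℤ), r ≠ 0 ∧
        Associated p
          ((∑ i, MvPolynomial.C (v a i) * MvPolynomial.X i)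
            + MvPolynomial.C (c a - (r : ℂ))) :=
  prime_divisors_of_restricted_shapovalov_det_general n v c hv D hgen
end
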